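/- arXiv:1406.1844 — 4 statements merged into one kernel-verified Lean document; each statement's English description precedes it below -/
import Mathlib

section
/- Let F be a field, and let Â11 (p1×p1), Â12 (p1×q), Â21 (q×p1), Â22 (q×q) be matrices over F. Let C11 be an invertible p1×p1 matrix, C12 a p1×q matrix, and let E2 and E2' be two invertible q×q matrices. For an invertible q×q matrix G define: A11(G) = (C11·Â11 + C12·Â21)·C11⁻¹, A12(G) = (C11·(Â12 − Â11·C11⁻¹·C12) + C12·(Â22 − Â21·C11⁻¹·C12))·G, A21(G) = G⁻¹·Â21·C11⁻¹, A22(G) = G⁻¹·(Â22 − Â21·C11⁻¹·C12)·G. Let s ∈ F and suppose s·I − (Â22 − Â21·C11⁻¹·C12) is invertible. Then s·I − A22(E2) and s·I − A22(E2') are both invertible, and A11(E2) + A12(E2)·(s·I − A22(E2))⁻¹·A21(E2) = A11(E2') + A12(E2')·(s·I − A22(E2'))⁻¹·A21(E2'). That is, the matrix W = A11 + A12·(sI − A22)⁻¹·A21 of the dynamical structure function is invariant under the choice of E2. -/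
open Matrix

lemma conj_resolvent {F : Type*} [Field F] {q : ℕ}
    (M G : Matrix (Fin q) (Fin q) F) (hG : IsUnit G) (s : F) :
    s • (1 : Matrix (Fin q) (Fin q) F) - G⁻¹ * M * G
      = G⁻¹ * (s • (1 : Matrix (Fin q) (Fin q) F) - M) * G := by
  rw [Matrix.mul_sub, Matrix.sub_mul, Matrix.mul_smul, mul_one, Matrix.smul_mul,
    Matrix.nonsing_inv_mul G ((Matrix.isUnit_iff_isUnit_det G).mp hG)]

theorem stmt2 {F : Type*} [Field F] (p1 q : ℕ)
    (Ah11 : Matrix (Fin p1) (Fin p1) F) (Ah12 : Matrix (Fin p1) (Fin q) F)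
    (Ah21 : Matrix (Fin q) (Fin p1) F) (Ah22 : Matrix (Fin q) (Fin q) F)
    (C11 : Matrix (Fin p1) (Fin p1) F) (C12 : Matrix (Fin p1) (Fin q) F)
    (E2 E2' : Matrix (Fin q) (Fin q) F)
    (hC11 : IsUnit C11) (hE2 : IsUnit E2) (hE2' : IsUnit E2')
    (s : F)
    (hs : IsUnit (s • (1 : Matrix (Fin q) (Fin q) F) - (Ah22 - Ah21 * C11⁻¹ * C12))) :
    let A11 : Matrix (Fin q) (Fin q) F → Matrix (Fin p1) (Fin p1) F :=
      fun _ => (C11 * Ah11 + C12 * Ah21) * C11⁻¹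
    let A12 : Matrix (Fin q) (Fin q) F → Matrix (Fin p1) (Fin q) F :=
      fun G => (C11 * (Ah12 - Ah11 * C11⁻¹ * C12) + C12 * (Ah22 - Ah21 * C11⁻¹ * C12)) * G
    let A21 : Matrix (Fin q) (Fin q) F → Matrix (Fin q) (Fin p1) F :=
      fun G => G⁻¹ * Ah21 * C11⁻¹
    let A22 : Matrix (Fin q) (Fin q) F → Matrix (Fin q) (Fin q) F :=
      fun G => G⁻¹ * (Ah22 - Ah21 * C11⁻¹ * C12) * G
    IsUnit (s • (1 : Matrix (Fin q) (Fin q) F) - A22 E2) ∧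
    IsUnit (s • (1 : Matrix (Fin q) (Fin q) F) - A22 E2') ∧
    A11 E2 + A12 E2 * (s • (1 : Matrix (Fin q) (Fin q) F) - A22 E2)⁻¹ * A21 E2 =
      A11 E2' + A12 E2' * (s • (1 : Matrix (Fin q) (Fin q) F) - A22 E2')⁻¹ * A21 E2' := by
  intro A11 A12 A21 A22
  set M := Ah22 - Ah21 * C11⁻¹ * C12 with hM
  have key : ∀ G : Matrix (Fin q) (Fin q) F, IsUnit G →
      A12 G * (s • (1 : Matrix (Fin q) (Fin q) F) - A22 G)⁻¹ * A21 G
        = (C11 * (Ah12 - Ah11 * C11⁻¹ * C12) + C12 * M)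
          * (s • (1 : Matrix (Fin q) (Fin q) F) - M)⁻¹ * (Ah21 * C11⁻¹) := by
    intro G hG
    have hGG : G⁻¹ * G = 1 := Matrix.nonsing_inv_mul G ((Matrix.isUnit_iff_isUnit_det G).mp hG)
    have hGG' : G * G⁻¹ = 1 := Matrix.mul_nonsing_inv G ((Matrix.isUnit_iff_isUnit_det G).mp hG)
    have hconj := conj_resolvent M G hG s
    have hinv : (s • (1 : Matrix (Fin q) (Fin q) F) - A22 G)⁻¹
        = G⁻¹ * (s • (1 : Matrix (Fin q) (Fin q) F) - M)⁻¹ * G := by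
      show (s • (1 : Matrix (Fin q) (Fin q) F) - G⁻¹ * M * G)⁻¹ = _
      rw [hconj, Matrix.mul_inv_rev, Matrix.mul_inv_rev,
        Matrix.nonsing_inv_nonsing_inv G ((Matrix.isUnit_iff_isUnit_det G).mp hG), mul_assoc]
    show (C11 * (Ah12 - Ah11 * C11⁻¹ * C12) + C12 * M) * G
        * (s • (1 : Matrix (Fin q) (Fin q) F) - A22 G)⁻¹ * (G⁻¹ * Ah21 * C11⁻¹) = _
    rw [hinv]
    calc (C11 * (Ah12 - Ah11 * C11⁻¹ * C12) + C12 * M) * G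
          * (G⁻¹ * (s • (1 : Matrix (Fin q) (Fin q) F) - M)⁻¹ * G) * (G⁻¹ * Ah21 * C11⁻¹)
        = (C11 * (Ah12 - Ah11 * C11⁻¹ * C12) + C12 * M) * (G * G⁻¹)
          * (s • (1 : Matrix (Fin q) (Fin q) F) - M)⁻¹ * ((G * G⁻¹) * (Ah21 * C11⁻¹)) := by
          simp only [Matrix.mul_assoc]
      _ = _ := by rw [hGG']; simp [Matrix.mul_assoc]
  have hu : ∀ G : Matrix (Fin q) (Fin q) F, IsUnit G →
      IsUnit (s • (1 : Matrix (Fin q) (Fin q) F) - A22 G) := by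
    intro G hG
    have hconj := conj_resolvent M G hG s
    show IsUnit (s • (1 : Matrix (Fin q) (Fin q) F) - G⁻¹ * M * G)
    rw [hconj]
    exact ((Matrix.isUnit_nonsing_inv_iff.mpr hG).mul hs).mul hG
  refine ⟨hu E2 hE2, hu E2' hE2', ?_⟩
  rw [key E2 hE2, key E2' hE2']
end

section
/- Let F be a field, and let Â12 (p1×q), Â11 (p1×p1), Â21 (q×p1), Â22 (q×q), B̂1 (p1×m), B̂2 (q×m) be matrices over F. Let C11 be an invertible p1×p1 matrix, C12 a p1×q matrix, and let E2 and E2' be two invertible q×q matrices. For an invertible q×q matrix G define: A12(G) = (C11·(Â12 − Â11·C11⁻¹·C12) + C12·(Â22 − Â21·C11⁻¹·C12))·G, A22(G) = G⁻¹·(Â22 − Â21·C11⁻¹·C12)·G, B1 = C11·B̂1 + C12·B̂2, B2(G) = G⁻¹·B̂2. Let s ∈ F and suppose s·I − (Â22 − Â21·C11⁻¹·C12) is invertible. Then B1 + A12(E2)·(s·I − A22(E2))⁻¹·B2(E2) = B1 + A12(E2')·(s·I − A22(E2'))⁻¹·B2(E2'). That is, the matrix V = B1 + A12·(sI − A22)⁻¹·B2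 of the dynamical structure function is invariant under the choice of E2. -/
open Matrix

lemma aux_inv {F : Type*} [Field F] {q : ℕ} (G M : Matrix (Fin q) (Fin q) F)
    (hG : IsUnit G) (s : F) (hs : IsUnit (s • (1 : Matrix (Fin q) (Fin q) F) - M)) :
    (s • (1 : Matrix (Fin q) (Fin q) F) - G⁻¹ * M * G)⁻¹ =
      G⁻¹ * (s • (1 : Matrix (Fin q) (Fin q) F) - M)⁻¹ * G := by
  have h1 : s • (1 : Matrix (Fin q) (Fin q) F) - G⁻¹ * M * G
      = G⁻¹ * (s • (1 : Matrix (Fin q) (Fin q) F) - M) * G := by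
    rw [Matrix.mul_sub, Matrix.sub_mul, Matrix.mul_smul, mul_one, Matrix.smul_mul,
      Matrix.nonsing_inv_mul G (isUnit_iff_isUnit_det G |>.mp hG)]
  rw [h1, Matrix.mul_inv_rev, Matrix.mul_inv_rev, Matrix.nonsing_inv_nonsing_inv G
    (isUnit_iff_isUnit_det G |>.mp hG), mul_assoc]

theorem stmt3 {F : Type*} [Field F] (p1 q m : ℕ)
    (Ah11 : Matrix (Fin p1) (Fin p1) F) (Ah12 : Matrix (Fin p1) (Fin q) F)
    (Ah21 : Matrix (Fin q) (Fin p1) F) (Ah22 : Matrix (Fin q) (Fin q) F)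
    (Bh1 : Matrix (Fin p1) (Fin m) F) (Bh2 : Matrix (Fin q) (Fin m) F)
    (C11 : Matrix (Fin p1) (Fin p1) F) (C12 : Matrix (Fin p1) (Fin q) F)
    (E2 E2' : Matrix (Fin q) (Fin q) F)
    (hC11 : IsUnit C11) (hE2 : IsUnit E2) (hE2' : IsUnit E2')
    (s : F)
    (hs : IsUnit (s • (1 : Matrix (Fin q) (Fin q) F) - (Ah22 - Ah21 * C11⁻¹ * C12))) :
    let A12 : Matrix (Fin q) (Fin q) F → Matrix (Fin p1) (Fin q) F :=
      fun G => (C11 * (Ah12 - Ah11 * C11⁻¹ * C12) + C12 * (Ah22 - Ah21 * C11⁻¹ * C12)) * G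
    let A22 : Matrix (Fin q) (Fin q) F → Matrix (Fin q) (Fin q) F :=
      fun G => G⁻¹ * (Ah22 - Ah21 * C11⁻¹ * C12) * G
    let B1 : Matrix (Fin p1) (Fin m) F := C11 * Bh1 + C12 * Bh2
    let B2 : Matrix (Fin q) (Fin q) F → Matrix (Fin q) (Fin m) F := fun G => G⁻¹ * Bh2
    B1 + A12 E2 * (s • (1 : Matrix (Fin q) (Fin q) F) - A22 E2)⁻¹ * B2 E2 =
      B1 + A12 E2' * (s • (1 : Matrix (Fin q) (Fin q) F) - A22 E2')⁻¹ * B2 E2' := by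
  intro A12 A22 B1 B2
  have key : ∀ G : Matrix (Fin q) (Fin q) F, IsUnit G →
      A12 G * (s • (1 : Matrix (Fin q) (Fin q) F) - A22 G)⁻¹ * B2 G =
      (C11 * (Ah12 - Ah11 * C11⁻¹ * C12) + C12 * (Ah22 - Ah21 * C11⁻¹ * C12)) *
        (s • (1 : Matrix (Fin q) (Fin q) F) - (Ah22 - Ah21 * C11⁻¹ * C12))⁻¹ * Bh2 := by
    intro G hG
    simp only [A12, A22, B2]
    rw [aux_inv _ _ hG s hs]
    have hGG : G * G⁻¹ = 1 := Matrix.mul_nonsing_inv G (isUnit_iff_isUnit_det G |>.mp hG)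
    have c1 : ∀ {n : ℕ} (Y : Matrix (Fin q) (Fin n) F), G * (G⁻¹ * Y) = Y := fun Y => by
      rw [← Matrix.mul_assoc, hGG, Matrix.one_mul]
    simp only [Matrix.mul_assoc, c1]
  rw [key E2 hE2, key E2' hE2']
end

section
/- Let Q be a p×p matrix over the field of rational functions in one variable over ℝ, and suppose every entry of Q is strictly proper, i.e., each entry is either zero or has negative intDegree (degree of numerator strictly less than degree of denominator). Then I − Q is invertible; equivalently, det(I − Q) ≠ 0. -/
open Matrix

open FunctionField in
theorem stmt11 (p : ℕ) (Q : Matrix (Fin p) (Fin p) (RatFunc ℝ))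
    (hQ : ∀ i j, Q i j = 0 ∨ (Q i j).intDegree < 0) :
    IsUnit ((1 : Matrix (Fin p) (Fin p) (RatFunc ℝ)) - Q) ∧
      ((1 : Matrix (Fin p) (Fin p) (RatFunc ℝ)) - Q).det ≠ 0 := by
  classical
  set v := RatFunc.inftyValuation ℝ with hv
  -- strictly proper entries have valuation < 1
  have hQv : ∀ i j, v (Q i j) < 1 := by
    intro i j
    rcases hQ i j with h | h
    · rw [h, map_zero]; exact zero_lt_one
    · have hne : Q i j ≠ 0 := by
        intro h0; rw [h0, RatFunc.intDegree_zero] at h; exact lt_irrefl 0 h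
      rw [hv, inftyValuation_apply, inftyValuation_of_nonzero ℝ hne]
      rw [show (1 : WithZero (Multiplicative ℤ)) = ((Multiplicative.ofAdd (0 : ℤ) : Multiplicative ℤ) : WithZero (Multiplicative ℤ)) by rfl]
      rw [WithZero.exp, WithZero.coe_lt_coe, Multiplicative.ofAdd_lt]
      exact h
  set M : Matrix (Fin p) (Fin p) (RatFunc ℝ) := 1 - Q with hM
  -- all entries of M have valuation ≤ 1
  have hMle : ∀ i j, v (M i j) ≤ 1 := by
    intro i j
    by_cases hij : i = j
    · subst hij
      have : M i i = 1 - Q i i := by simp [hM, Matrix.sub_apply, Matrix.one_apply]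
      rw [this, v.map_one_sub_of_lt (hQv i i)]
    · have : M i j = -Q i j := by simp [hM, Matrix.sub_apply, Matrix.one_apply, hij]
      rw [this, v.map_neg]
      exact le_of_lt (hQv i j)
  have hMoff : ∀ i j, i ≠ j → v (M i j) < 1 := by
    intro i j hij
    have : M i j = -Q i j := by simp [hM, Matrix.sub_apply, Matrix.one_apply, hij]
    rw [this, v.map_neg]
    exact hQv i j
  -- product lemma for the identity permutation
  have hprod : ∀ s : Finset (Fin p), v (∏ i ∈ s, M i i - 1) < 1 := by
    intro s
    induction s using Finset.induction_on with
    | empty => simp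
    | @insert i s his ih =>
      rw [Finset.prod_insert his]
      have hMii : M i i = 1 - Q i i := by simp [hM, Matrix.sub_apply, Matrix.one_apply]
      have key : M i i * ∏ j ∈ s, M j j - 1
          = M i i * (∏ j ∈ s, M j j - 1) + (- Q i i) := by
        rw [hMii]; ring
      rw [key]
      refine lt_of_le_of_lt (v.map_add _ _) (max_lt ?_ ?_)
      · rw [v.map_mul]
        calc v (M i i) * v (∏ j ∈ s, M j j - 1)
            ≤ 1 * v (∏ j ∈ s, M j j - 1) := mul_le_mul_left (hMle i i) _
          _ = v (∏ j ∈ s, M j j - 1) := one_mul _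
          _ < 1 := ih
      · rw [v.map_neg]; exact hQv i i
  -- each permutation term (with identity term adjusted by 1) has valuation < 1
  have hterm : ∀ σ : Equiv.Perm (Fin p),
      v (Equiv.Perm.sign σ • ∏ i, M (σ i) i - if σ = 1 then 1 else 0) < 1 := by
    intro σ
    by_cases hσ : σ = 1
    · subst hσ
      simpa using hprod Finset.univ
    · rw [if_neg hσ, sub_zero]
      have hsmul : v (Equiv.Perm.sign σ • ∏ i, M (σ i) i) = v (∏ i, M (σ i) i) := by
        rcases Int.units_eq_one_or (Equiv.Perm.sign σ) with h | h <;> rw [h]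
        · rw [one_smul]
        · rw [Units.neg_smul, one_smul, v.map_neg]
      rw [hsmul]
      obtain ⟨i₀, hi₀⟩ : ∃ i, σ i ≠ i := by
        by_contra h
        push_neg at h
        exact hσ (Equiv.ext h)
      rw [map_prod v]
      rw [← Finset.mul_prod_erase Finset.univ _ (Finset.mem_univ i₀)]
      have h1 : ∏ j ∈ Finset.univ.erase i₀, v (M (σ j) j) ≤ 1 :=
        Finset.prod_le_one' (fun j _ => hMle (σ j) j)
      calc v (M (σ i₀) i₀) * ∏ j ∈ Finset.univ.erase i₀, v (M (σ j) j)
          ≤ v (M (σ i₀) i₀) := mul_le_of_le_one_right' h1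
        _ < 1 := hMoff (σ i₀) i₀ hi₀
  -- conclude
  have hdet1 : v (M.det - 1) < 1 := by
    have hdet : M.det - 1
        = ∑ σ : Equiv.Perm (Fin p),
            (Equiv.Perm.sign σ • ∏ i, M (σ i) i - if σ = 1 then 1 else 0) := by
      rw [Finset.sum_sub_distrib, ← Matrix.det_apply]
      simp
    rw [hdet]
    exact v.map_sum_lt one_ne_zero (fun σ _ => hterm σ)
  have hvdet : v M.det = 1 := by
    have : M.det = 1 + (M.det - 1) := by ring
    rw [this]
    exact v.map_one_add_of_lt hdet1
  have hdet_ne : M.det ≠ 0 := by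
    intro h
    rw [h, map_zero] at hvdet
    exact zero_ne_one hvdet
  exact ⟨(Matrix.isUnit_iff_isUnit_det M).mpr (isUnit_iff_ne_zero.mpr hdet_ne), hdet_ne⟩
end

section
/- Let A11 (p1×p1), A12 (p1×q), A21 (q×p1), A22 (q×q), B1 (p1×m), B2 (q×m) be matrices over ℝ, embedded as constant matrices over the field of rational functions in the variable s over ℝ. Then: (1) s·I − A22 is invertible over this field; define W = A11 + A12·(s·I − A22)⁻¹·A21 and V = B1 + A12·(s·I − A22)⁻¹·B2, and let D_W be the diagonal matrix of the diagonal entries of W; (2) s·I − D_W is invertible; and (3) defining Q = (s·I − D_W)⁻¹·(W − D_W) and P = (s·I − D_W)⁻¹·V, every entry of Q and of P is strictly proper (zero or of negative intDegree), and every diagonal entry of Q is zero. -/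
open Matrix Polynomial

/-- A rational function is strictly proper if it is zero or its numerator has
strictly smaller degree than its denominator. -/
def StrictlyProper (f : RatFunc ℝ) : Prop := f = 0 ∨ f.intDegree < 0

namespace Stmt14Aux

/-- A rational function is proper if it is zero or of nonpositive degree. -/
def Pr (f : RatFunc ℝ) : Prop := f = 0 ∨ f.intDegree ≤ 0

lemma sp_pr {f : RatFunc ℝ} (h : StrictlyProper f) : Pr f := h.imp id le_of_lt

lemma pr_C (a : ℝ) : Pr (RatFunc.C a) := Or.inr (le_of_eq (RatFunc.intDegree_C a))

lemma sp_zero : StrictlyProper 0 := Or.inl rfl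

lemma sp_add {x y : RatFunc ℝ} (hx : StrictlyProper x) (hy : StrictlyProper y) :
    StrictlyProper (x + y) := by
  by_cases hx0 : x = 0
  · simpa [hx0] using hy
  by_cases hy0 : y = 0
  · simpa [hy0] using hx
  by_cases hxy : x + y = 0
  · exact Or.inl hxy
  exact Or.inr ((RatFunc.intDegree_add_le hy0 hxy).trans_lt
    (max_lt (hx.resolve_left hx0) (hy.resolve_left hy0)))

lemma pr_add {x y : RatFunc ℝ} (hx : Pr x) (hy : Pr y) : Pr (x + y) := by
  by_cases hx0 : x = 0
  · simpa [hx0] using hy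
  by_cases hy0 : y = 0
  · simpa [hy0] using hx
  by_cases hxy : x + y = 0
  · exact Or.inl hxy
  exact Or.inr ((RatFunc.intDegree_add_le hy0 hxy).trans
    (max_le (hx.resolve_left hx0) (hy.resolve_left hy0)))

lemma sp_mul_pr {x y : RatFunc ℝ} (hx : StrictlyProper x) (hy : Pr y) :
    StrictlyProper (x * y) := by
  by_cases hx0 : x = 0
  · simp [hx0, sp_zero]
  by_cases hy0 : y = 0
  · simp [hy0, sp_zero]
  refine Or.inr ?_
  rw [RatFunc.intDegree_mul hx0 hy0]
  exact add_neg_of_neg_of_nonpos (hx.resolve_left hx0) (hy.resolve_left hy0)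

lemma pr_mul_sp {x y : RatFunc ℝ} (hx : Pr x) (hy : StrictlyProper y) :
    StrictlyProper (x * y) := by
  rw [mul_comm]; exact sp_mul_pr hy hx

lemma sp_sum {ι : Type*} {s : Finset ι} {f : ι → RatFunc ℝ}
    (h : ∀ i ∈ s, StrictlyProper (f i)) : StrictlyProper (∑ i ∈ s, f i) :=
  Finset.sum_induction f StrictlyProper (fun _ _ => sp_add) sp_zero h

lemma intDeg_inv {x : RatFunc ℝ} (hx : x ≠ 0) : x⁻¹.intDegree = -x.intDegree := by
  have h := RatFunc.intDegree_mul hx (inv_ne_zero hx)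
  rw [mul_inv_cancel₀ hx, RatFunc.intDegree_one] at h
  linarith

lemma ne_X_sub {f : RatFunc ℝ} (hf : Pr f) : RatFunc.X - f ≠ 0 := by
  intro h
  rw [sub_eq_zero] at h
  rcases hf with rfl | hf
  · exact RatFunc.X_ne_zero h
  · rw [← h, RatFunc.intDegree_X] at hf; norm_num at hf

lemma intDeg_X_sub {f : RatFunc ℝ} (hf : Pr f) : (RatFunc.X - f).intDegree = 1 := by
  by_cases hf0 : f = 0
  · simp [hf0, RatFunc.intDegree_X]
  have hfd : f.intDegree ≤ 0 := hf.resolve_left hf0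
  have hne : RatFunc.X - f ≠ 0 := ne_X_sub hf
  have hub : (RatFunc.X - f).intDegree ≤ 1 := by
    rw [sub_eq_add_neg]
    refine (RatFunc.intDegree_add_le (neg_ne_zero.2 hf0) ?_).trans ?_
    · rwa [← sub_eq_add_neg]
    · rw [RatFunc.intDegree_X, RatFunc.intDegree_neg]
      exact max_le le_rfl (hfd.trans zero_le_one)
  have hlb : (1 : ℤ) ≤ (RatFunc.X - f).intDegree := by
    have h1 : (RatFunc.X : RatFunc ℝ).intDegree ≤
        max (RatFunc.X - f).intDegree f.intDegree := by
      have := RatFunc.intDegree_add_le (x := RatFunc.X - f) (y := f) hf0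
        (by rw [sub_add_cancel]; exact RatFunc.X_ne_zero)
      rwa [sub_add_cancel] at this
    rw [RatFunc.intDegree_X] at h1
    rcases max_cases (RatFunc.X - f).intDegree f.intDegree with ⟨he, _⟩ | ⟨he, hle⟩
    · omega
    · omega
  omega

lemma sp_inv_X_sub {f : RatFunc ℝ} (hf : Pr f) : StrictlyProper (RatFunc.X - f)⁻¹ := by
  refine Or.inr ?_
  rw [intDeg_inv (ne_X_sub hf), intDeg_X_sub hf]
  norm_num

noncomputable def φ : Polynomial ℝ →+* RatFunc ℝ := algebraMap (Polynomial ℝ) (RatFunc ℝ)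

lemma map_charmatrix {n : ℕ} (A : Matrix (Fin n) (Fin n) ℝ) :
    Matrix.scalar (Fin n) (RatFunc.X : RatFunc ℝ) - A.map (fun a => RatFunc.C a) =
      (charmatrix A).map φ := by
  ext i j
  by_cases h : i = j <;>
    simp [h, charmatrix_apply, Matrix.scalar_apply, Matrix.diagonal_apply, φ,
      RatFunc.algebraMap_C, RatFunc.algebraMap_X, map_sub]

lemma det_map_charmatrix {n : ℕ} (A : Matrix (Fin n) (Fin n) ℝ) :
    (φ.mapMatrix (charmatrix A)).det = φ A.charpoly := by
  rw [← RingHom.map_det, Matrix.charpoly]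

lemma adj_deg {n : ℕ} (A : Matrix (Fin n) (Fin n) ℝ) (i j : Fin n) :
    ((charmatrix A).adjugate i j).natDegree ≤ n - 1 := by
  rw [Matrix.adjugate_apply, Matrix.det_apply']
  refine natDegree_sum_le_of_forall_le _ _ fun σ _ => ?_
  refine (natDegree_mul_le).trans ?_
  rw [Polynomial.natDegree_intCast, zero_add]
  refine (natDegree_prod_le _ _).trans ?_
  have hb : ∀ k : Fin n,
      ((((charmatrix A).updateRow j (Pi.single i 1)) (σ k) k).natDegree)
        ≤ if σ k = j then 0 else 1 := by
    intro k
    rw [Matrix.updateRow_apply]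
    split_ifs with h
    · rw [Pi.single_apply]
      split_ifs <;> simp
    · rw [charmatrix_apply]
      by_cases hk : σ k = k
      · rw [hk]
        simp [Matrix.diagonal_apply_eq, Polynomial.natDegree_X_sub_C]
      · rw [Matrix.diagonal_apply_ne _ hk, zero_sub]
        simp
  calc ∑ k, ((((charmatrix A).updateRow j (Pi.single i 1)) (σ k) k).natDegree)
      ≤ ∑ k, if σ k = j then 0 else 1 := Finset.sum_le_sum fun k _ => hb k
    _ = n - 1 := by
        have ha : ∀ k : Fin n, (σ k = j) ↔ (k = σ⁻¹ j) := by
          intro k; constructor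
          · intro h; simp [← h]
          · intro h; simp [h]
        simp_rw [ha]
        rw [← Finset.sum_erase_add _ _ (Finset.mem_univ (σ⁻¹ j)), if_pos rfl, add_zero,
          Finset.sum_congr rfl (fun k hk => if_neg (Finset.ne_of_mem_erase hk))]
        simp [Finset.card_erase_of_mem]

lemma inv_entry_sp {n : ℕ} (A : Matrix (Fin n) (Fin n) ℝ) (i j : Fin n) :
    StrictlyProper ((Matrix.scalar (Fin n) (RatFunc.X : RatFunc ℝ) -
      A.map (fun a => RatFunc.C a))⁻¹ i j) := by
  rw [map_charmatrix, Matrix.inv_def, ← RingHom.mapMatrix_apply, ← RingHom.map_adjugate]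
  simp only [Matrix.smul_apply, smul_eq_mul]
  by_cases hp : (charmatrix A).adjugate i j = 0
  · left
    simp [RingHom.mapMatrix_apply, Matrix.map_apply, hp]
  · right
    have hq : A.charpoly ≠ 0 := (Matrix.charpoly_monic A).ne_zero
    have hφq : φ A.charpoly ≠ 0 := RatFunc.algebraMap_ne_zero hq
    have hφp : φ ((charmatrix A).adjugate i j) ≠ 0 := RatFunc.algebraMap_ne_zero hp
    rw [det_map_charmatrix, Ring.inverse_eq_inv, RingHom.mapMatrix_apply, Matrix.map_apply]
    rw [RatFunc.intDegree_mul (inv_ne_zero hφq) hφp, intDeg_inv hφq]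
    have h1 : (φ A.charpoly).intDegree = (n : ℤ) := by
      rw [φ, RatFunc.intDegree_polynomial, Matrix.charpoly_natDegree_eq_dim]
      simp
    have h2 : (φ ((charmatrix A).adjugate i j)).intDegree = (((charmatrix A).adjugate i j).natDegree : ℤ) :=
      RatFunc.intDegree_polynomial
    have h3 := adj_deg A i j
    have hn : 1 ≤ n := Nat.pos_of_ne_zero (by rintro rfl; exact i.elim0)
    rw [h1, h2]
    omega

lemma isUnit_charlike {n : ℕ} (A : Matrix (Fin n) (Fin n) ℝ) :
    IsUnit (Matrix.scalar (Fin n) (RatFunc.X : RatFunc ℝ) - A.map (fun a => RatFunc.C a)) := by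
  rw [map_charmatrix, Matrix.isUnit_iff_isUnit_det, ← RingHom.mapMatrix_apply,
    det_map_charmatrix, isUnit_iff_ne_zero]
  exact RatFunc.algebraMap_ne_zero (Matrix.charpoly_monic A).ne_zero

end Stmt14Aux

open Stmt14Aux in
theorem stmt14 (p1 q m : ℕ)
    (A11 : Matrix (Fin p1) (Fin p1) ℝ) (A12 : Matrix (Fin p1) (Fin q) ℝ)
    (A21 : Matrix (Fin q) (Fin p1) ℝ) (A22 : Matrix (Fin q) (Fin q) ℝ)
    (B1 : Matrix (Fin p1) (Fin m) ℝ) (B2 : Matrix (Fin q) (Fin m) ℝ) :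
    let sIq : Matrix (Fin q) (Fin q) (RatFunc ℝ) :=
      Matrix.scalar (Fin q) (RatFunc.X : RatFunc ℝ)
    let sIp : Matrix (Fin p1) (Fin p1) (RatFunc ℝ) :=
      Matrix.scalar (Fin p1) (RatFunc.X : RatFunc ℝ)
    let W : Matrix (Fin p1) (Fin p1) (RatFunc ℝ) :=
      A11.map (fun a => RatFunc.C a) +
        A12.map (fun a => RatFunc.C a) * (sIq - A22.map (fun a => RatFunc.C a))⁻¹ *
          A21.map (fun a => RatFunc.C a)
    let V : Matrix (Fin p1) (Fin m) (RatFunc ℝ) :=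
      B1.map (fun a => RatFunc.C a) +
        A12.map (fun a => RatFunc.C a) * (sIq - A22.map (fun a => RatFunc.C a))⁻¹ *
          B2.map (fun a => RatFunc.C a)
    let DW : Matrix (Fin p1) (Fin p1) (RatFunc ℝ) := Matrix.diagonal (fun i => W i i)
    let Q : Matrix (Fin p1) (Fin p1) (RatFunc ℝ) := (sIp - DW)⁻¹ * (W - DW)
    let P : Matrix (Fin p1) (Fin m) (RatFunc ℝ) := (sIp - DW)⁻¹ * V
    IsUnit (sIq - A22.map (fun a => RatFunc.C a)) ∧
    IsUnit (sIp - DW) ∧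
    (∀ i j, StrictlyProper (Q i j)) ∧
    (∀ i j, StrictlyProper (P i j)) ∧
    (∀ i, Q i i = 0) := by
  intro sIq sIp W V DW Q P
  have hinvSP : ∀ k l, StrictlyProper ((sIq - A22.map (fun a => RatFunc.C a))⁻¹ k l) :=
    fun k l => inv_entry_sp A22 k l
  have hW : ∀ i j, W i j = RatFunc.C (A11 i j) +
      ∑ l, (∑ k, RatFunc.C (A12 i k) * (sIq - A22.map (fun a => RatFunc.C a))⁻¹ k l) *
        RatFunc.C (A21 l j) := by
    intro i j
    simp [W, Matrix.add_apply, Matrix.mul_apply, Matrix.map_apply]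
  have hV : ∀ i j, V i j = RatFunc.C (B1 i j) +
      ∑ l, (∑ k, RatFunc.C (A12 i k) * (sIq - A22.map (fun a => RatFunc.C a))⁻¹ k l) *
        RatFunc.C (B2 l j) := by
    intro i j
    simp [V, Matrix.add_apply, Matrix.mul_apply, Matrix.map_apply]
  have hWpr : ∀ i j, Pr (W i j) := by
    intro i j
    rw [hW]
    exact pr_add (pr_C _) (sp_pr (sp_sum fun l _ => sp_mul_pr
      (sp_sum fun k _ => pr_mul_sp (pr_C _) (hinvSP k l)) (pr_C _)))
  have hVpr : ∀ i j, Pr (V i j) := by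
    intro i j
    rw [hV]
    exact pr_add (pr_C _) (sp_pr (sp_sum fun l _ => sp_mul_pr
      (sp_sum fun k _ => pr_mul_sp (pr_C _) (hinvSP k l)) (pr_C _)))
  have hne : ∀ i, (RatFunc.X : RatFunc ℝ) - W i i ≠ 0 := fun i => ne_X_sub (hWpr i i)
  have hdiag : sIp - DW = Matrix.diagonal (fun i => (RatFunc.X : RatFunc ℝ) - W i i) := by
    ext i j
    by_cases h : i = j <;>
      simp [sIp, DW, Matrix.scalar_apply, Matrix.sub_apply, Matrix.diagonal_apply, h]
  have hinv2 : (sIp - DW)⁻¹ =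
      Matrix.diagonal (fun i => ((RatFunc.X : RatFunc ℝ) - W i i)⁻¹) := by
    rw [hdiag]
    refine Matrix.inv_eq_left_inv ?_
    rw [Matrix.diagonal_mul_diagonal]
    have h1 : ∀ i, ((RatFunc.X : RatFunc ℝ) - W i i)⁻¹ * (RatFunc.X - W i i) = 1 :=
      fun i => inv_mul_cancel₀ (hne i)
    simp [h1]
  have hQ : ∀ i j, Q i j = ((RatFunc.X : RatFunc ℝ) - W i i)⁻¹ * (W - DW) i j := by
    intro i j
    show ((sIp - DW)⁻¹ * (W - DW)) i j = _
    rw [hinv2, Matrix.diagonal_mul]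
  have hP : ∀ i j, P i j = ((RatFunc.X : RatFunc ℝ) - W i i)⁻¹ * V i j := by
    intro i j
    show ((sIp - DW)⁻¹ * V) i j = _
    rw [hinv2, Matrix.diagonal_mul]
  refine ⟨isUnit_charlike A22, ?_, ?_, ?_, ?_⟩
  · rw [hdiag, Matrix.isUnit_iff_isUnit_det, Matrix.det_diagonal, isUnit_iff_ne_zero]
    exact Finset.prod_ne_zero_iff.mpr fun i _ => hne i
  · intro i j
    rw [hQ]
    refine sp_mul_pr (sp_inv_X_sub (hWpr i i)) ?_
    by_cases h : i = j
    · subst h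
      left
      simp [Matrix.sub_apply, DW, Matrix.diagonal_apply_eq]
    · have : (W - DW) i j = W i j := by
        simp [Matrix.sub_apply, DW, Matrix.diagonal_apply_ne _ h]
      rw [this]
      exact hWpr i j
  · intro i j
    rw [hP]
    exact sp_mul_pr (sp_inv_X_sub (hWpr i i)) (hVpr i j)
  · intro i
    rw [hQ]
    simp [Matrix.sub_apply, DW, Matrix.diagonal_apply_eq]
end
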